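/- Let T be a CNF theory, M ⊆ At(T), and L = {¬x : x ∈ At(T) \ M}. Then M is a minimal model of T if and only if M is a model of T and, for every atom a ∈ M, the CNF theory T_L ∪ {{¬a}} is unsatisfiable (has no model). -/

import Mathlib

open Classical

/-- A literal: `(true, a)` is the atom `a`, `(false, a)` is the negated atom `¬ a`. -/
abbrev Lit : Type := Bool × ℕ

/-- A clause: a finite set of literals, viewed as the disjunction of its literals. -/
abbrev Clause : Type := Finset Lit

/-- A CNF theory: a finite set of clauses. -/
abbrev CTheory : Type := Finset Clause

/-- A clause is proper: it contains no atom together with its negation. -/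
def Clause.ok (c : Clause) : Prop :=
  ∀ a : ℕ, ¬ (((true, a) : Lit) ∈ c ∧ ((false, a) : Lit) ∈ c)

/-- The set of atoms occurring in a clause. -/
def clauseAtoms (c : Clause) : Finset ℕ := c.image Prod.snd

/-- `At(T)`: the set of atoms occurring in a CNF theory. -/
def thAtoms (T : CTheory) : Finset ℕ := T.sup clauseAtoms

/-- A set of atoms `M` satisfies a literal `l`. -/
def satLit (M : Finset ℕ) (l : Lit) : Prop := if l.1 then l.2 ∈ M else l.2 ∉ M

/-- `M` is a model of the CNF theory `T`. -/
def isModel (M : Finset ℕ) (T : CTheory) : Prop := ∀ c ∈ T, ∃ l ∈ c, satLit M l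

/-- `M` is a minimal model of `T`: a model `M ⊆ At(T)` no proper subset of which is a model. -/
def isMinModel (M : Finset ℕ) (T : CTheory) : Prop :=
  isModel M T ∧ M ⊆ thAtoms T ∧ ∀ M' : Finset ℕ, M' ⊂ M → ¬ isModel M' T

/-- The dual of a literal. -/
def litNeg (l : Lit) : Lit := (!l.1, l.2)

/-- `L̄`: the set of duals of the literals of `L`. -/
def negSet (L : Finset Lit) : Finset Lit := L.image litNeg

/-- `L⁺`: the set of atoms belonging to `L`. -/
def posAtoms (L : Finset Lit) : Finset ℕ := (L.filter (fun l => l.1 = true)).image Prod.snd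

/-- `L⁻`: the set of atoms whose negation belongs to `L`. -/
def negAtoms (L : Finset Lit) : Finset ℕ := (L.filter (fun l => l.1 = false)).image Prod.snd

/-- A set of atoms `M` is consistent with a set of literals `L` if `L⁺ ⊆ M` and `L⁻ ∩ M = ∅`. -/
def consistentWith (M : Finset ℕ) (L : Finset Lit) : Prop :=
  posAtoms L ⊆ M ∧ ∀ a ∈ negAtoms L, a ∉ M

/-- `Lit(T)`: the set of all literals over the atoms of `T`. -/
def litsOf (T : CTheory) : Finset Lit :=
  (thAtoms T).image (fun a => ((true, a) : Lit)) ∪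
    (thAtoms T).image (fun a => ((false, a) : Lit))

/-- `T_L = {c \ L̄ : c ∈ T, c ∩ L = ∅}`. -/
def reduceTh (T : CTheory) (L : Finset Lit) : CTheory :=
  (T.filter (fun c => ∀ l ∈ c, l ∉ L)).image (fun c => c \ negSet L)

/-!
Write `L = {¬x : x ∈ At(T) \ M}`. A model `M' ⊊ M` of `T` misses some `a ∈ M`, and since it
satisfies every literal of `L` it is also a model of `T_L ∪ {{¬a}}`. Conversely, if `N` is a model
of `T_L ∪ {{¬a}}`, then `N ∩ M` is a model of `T`: a clause meeting `L` contains some `¬x` with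
`x ∉ M`, and in a clause `c` disjoint from `L` the literal of `c \ L̄` made true by `N` is either
negative or an atom of `M`. As `a ∉ N ∩ M`, this is a proper subset of `M`.
-/

def negLits (S : Finset ℕ) : Finset Lit := S.image (fun x => ((false, x) : Lit))

@[simp]
lemma satLit_true (N : Finset ℕ) (x : ℕ) : satLit N (true, x) ↔ x ∈ N := Iff.rfl

@[simp]
lemma satLit_false (N : Finset ℕ) (x : ℕ) : satLit N (false, x) ↔ x ∉ N := Iff.rfl

lemma satLit_litNeg (N : Finset ℕ) (l : Lit) : satLit N (litNeg l) ↔ ¬ satLit N l := by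
  obtain ⟨_ | _, x⟩ := l <;> simp [litNeg]

lemma mem_negLits {S : Finset ℕ} {l : Lit} : l ∈ negLits S ↔ l.1 = false ∧ l.2 ∈ S := by
  obtain ⟨b, x⟩ := l
  simp only [negLits, Finset.mem_image, Prod.mk.injEq]
  constructor
  · rintro ⟨x, hx, rfl, rfl⟩
    exact ⟨rfl, hx⟩
  · rintro ⟨rfl, hx⟩
    exact ⟨x, hx, rfl, rfl⟩

lemma mem_negSet_negLits {S : Finset ℕ} {l : Lit} :
    l ∈ negSet (negLits S) ↔ l.1 = true ∧ l.2 ∈ S := by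
  obtain ⟨b, x⟩ := l
  simp only [negSet, negLits, Finset.mem_image, litNeg, Prod.mk.injEq, exists_exists_and_eq_and]
  constructor
  · rintro ⟨x, hx, rfl, rfl⟩
    exact ⟨rfl, hx⟩
  · rintro ⟨rfl, hx⟩
    exact ⟨x, hx, rfl, rfl⟩

lemma atom_mem_thAtoms {T : CTheory} {c : Clause} {l : Lit} (hc : c ∈ T) (hl : l ∈ c) :
    l.2 ∈ thAtoms T :=
  Finset.le_sup (f := clauseAtoms) hc (Finset.mem_image_of_mem Prod.snd hl)

lemma sdiff_negSet_mem_reduceTh {T : CTheory} {L : Finset Lit} {c : Clause} (hc : c ∈ T)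
    (hcL : ∀ l ∈ c, l ∉ L) : c \ negSet L ∈ reduceTh T L :=
  Finset.mem_image_of_mem _ (Finset.mem_filter.mpr ⟨hc, hcL⟩)

lemma isModel_insert_neg_singleton {N : Finset ℕ} {T : CTheory} {a : ℕ} :
    isModel N (insert ({((false, a) : Lit)} : Clause) T) ↔ a ∉ N ∧ isModel N T := by
  simp [isModel]

lemma isModel_reduceTh {N : Finset ℕ} {T : CTheory} {L : Finset Lit} (hN : isModel N T)
    (hL : ∀ l ∈ L, satLit N l) : isModel N (reduceTh T L) := by
  intro c' hc'
  obtain ⟨c, hc, rfl⟩ := Finset.mem_image.mp hc'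
  obtain ⟨l, hlc, hl⟩ := hN c (Finset.mem_filter.mp hc).1
  refine ⟨l, Finset.mem_sdiff.mpr ⟨hlc, fun hlL => ?_⟩, hl⟩
  obtain ⟨k, hk, rfl⟩ := Finset.mem_image.mp hlL
  exact (satLit_litNeg N k).mp hl (hL k hk)

lemma isModel_inter_of_isModel_reduceTh {N M : Finset ℕ} {T : CTheory}
    (hN : isModel N (reduceTh T (negLits (thAtoms T \ M)))) : isModel (N ∩ M) T := by
  intro c hc
  by_cases hcL : ∃ l ∈ c, l ∈ negLits (thAtoms T \ M)
  · obtain ⟨⟨b, x⟩, hlc, hlL⟩ := hcL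
    obtain ⟨rfl, hx⟩ := mem_negLits.mp hlL
    exact ⟨_, hlc, by simp [(Finset.mem_sdiff.mp hx).2]⟩
  · simp only [not_exists, not_and] at hcL
    obtain ⟨⟨b, x⟩, hl, hsat⟩ := hN _ (sdiff_negSet_mem_reduceTh hc hcL)
    obtain ⟨hlc, hlL⟩ := Finset.mem_sdiff.mp hl
    refine ⟨_, hlc, ?_⟩
    cases b with
    | false => exact fun hx => (satLit_false N x).mp hsat (Finset.mem_inter.mp hx).1
    | true =>
      have hxM : x ∈ M := by
        by_contra hxM
        exact hlL <| mem_negSet_negLits.mpr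
          ⟨rfl, Finset.mem_sdiff.mpr ⟨atom_mem_thAtoms hc hlc, hxM⟩⟩
      exact Finset.mem_inter.mpr ⟨hsat, hxM⟩

theorem minModel_iff_unsat_general (T : CTheory)
    (M : Finset ℕ) (hM : M ⊆ thAtoms T) :
    isMinModel M T ↔
      (isModel M T ∧ ∀ a ∈ M,
        ¬ ∃ N : Finset ℕ, isModel N
          (insert ({((false, a) : Lit)} : Clause)
            (reduceTh T ((thAtoms T \ M).image (fun x => ((false, x) : Lit)))))) := by
  constructor
  · rintro ⟨hMod, -, hMin⟩
    refine ⟨hMod, fun a haM ⟨N, hN⟩ => ?_⟩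
    obtain ⟨haN, hN⟩ := isModel_insert_neg_singleton.mp hN
    have hssub : N ∩ M ⊂ M :=
      (Finset.ssubset_iff_of_subset Finset.inter_subset_right).mpr
        ⟨a, haM, fun ha => haN (Finset.mem_inter.mp ha).1⟩
    exact hMin _ hssub (isModel_inter_of_isModel_reduceTh hN)
  · rintro ⟨hMod, hUnsat⟩
    refine ⟨hMod, hM, fun M' hssub hMod' => ?_⟩
    obtain ⟨a, haM, haM'⟩ := Finset.exists_of_ssubset hssub
    have hL : ∀ l ∈ negLits (thAtoms T \ M), satLit M' l := by
      rintro ⟨b, x⟩ hl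
      obtain ⟨rfl, hx⟩ := mem_negLits.mp hl
      exact fun hxM' => (Finset.mem_sdiff.mp hx).2 (hssub.subset hxM')
    exact hUnsat a haM ⟨M', isModel_insert_neg_singleton.mpr ⟨haM', isModel_reduceTh hMod' hL⟩⟩

/-- Let `T` be a CNF theory, `M ⊆ At(T)`, and `L = {¬x : x ∈ At(T) \ M}`. Then `M` is a
minimal model of `T` iff `M` is a model of `T` and for every atom `a ∈ M` the CNF theory
`T_L ∪ {{¬a}}` is unsatisfiable. -/
theorem minModel_iff_unsat (T : CTheory) (hok : ∀ c ∈ T, Clause.ok c)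
    (M : Finset ℕ) (hM : M ⊆ thAtoms T) :
    isMinModel M T ↔
      (isModel M T ∧ ∀ a ∈ M,
        ¬ ∃ N : Finset ℕ, isModel N
          (insert ({((false, a) : Lit)} : Clause)
            (reduceTh T ((thAtoms T \ M).image (fun x => ((false, x) : Lit)))))) :=
  minModel_iff_unsat_general T M hM
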